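/- (Massey's conservation law) Let (X^n, Y^n) be jointly distributed random sequences with finite alphabets. Then the mutual information decomposes as I(X^n; Y^n) = I(X^n→Y^n) + I(DY^n→X^n). -/

import Mathlib

/-!
Fix an outcome `ω` of positive probability and let `A i`, `B i`, `C i` be the probabilities of
the prefix events `{X^i = x^i, Y^i = y^i}`, `{X^i = x^i}`, `{Y^i = y^i}`, and `D i` that of
`{X^{i+1} = x^{i+1}, Y^i = y^i}`. At `ω` the `i`-th terms of the directed information and of
the delayed reverse one have integrands `log (A (i+1) C i / (D i C (i+1)))` and
`log (D i B i / (A i B (i+1)))`, whose sum is the increment of `log (A i / (B i C i))`.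
Summing over `i < n` telescopes to the integrand `log (A n / (B n C n))` of `I(X^n; Y^n)`,
because the empty prefixes have probability one; averaging over `ω` gives the law.
-/

open Finset

noncomputable section

-- Probability of the event `E` under the pmf `p` on a finite sample space `Ω`.
open Classical in
def pr {Ω : Type*} [Fintype Ω] (p : Ω → ℝ) (E : Ω → Prop) : ℝ :=
  ∑ ω, if E ω then p ω else 0

-- Shannon entropy `H(U)` (pointwise form).
def entropy {Ω α : Type*} [Fintype Ω] (p : Ω → ℝ) (U : Ω → α) : ℝ :=
  -∑ ω, p ω * Real.log (pr p (fun ω' => U ω' = U ω))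

-- Conditional Shannon entropy `H(U | V)`.
def condEntropy {Ω α β : Type*} [Fintype Ω] (p : Ω → ℝ) (U : Ω → α) (V : Ω → β) : ℝ :=
  -∑ ω, p ω * Real.log
      (pr p (fun ω' => U ω' = U ω ∧ V ω' = V ω) / pr p (fun ω' => V ω' = V ω))

-- Mutual information `I(U ; V)`.
def mutualInfo {Ω α β : Type*} [Fintype Ω] (p : Ω → ℝ) (U : Ω → α) (V : Ω → β) : ℝ :=
  ∑ ω, p ω * Real.log
      (pr p (fun ω' => U ω' = U ω ∧ V ω' = V ω) /
        (pr p (fun ω' => U ω' = U ω) * pr p (fun ω' => V ω' = V ω)))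

-- Conditional mutual information `I(U ; V | W)`.
def condMutualInfo {Ω α β γ : Type*} [Fintype Ω] (p : Ω → ℝ)
    (U : Ω → α) (V : Ω → β) (W : Ω → γ) : ℝ :=
  ∑ ω, p ω * Real.log
      ((pr p (fun ω' => U ω' = U ω ∧ V ω' = V ω ∧ W ω' = W ω) *
          pr p (fun ω' => W ω' = W ω)) /
        (pr p (fun ω' => U ω' = U ω ∧ W ω' = W ω) *
          pr p (fun ω' => V ω' = V ω ∧ W ω' = W ω)))

-- The prefix `(X_0, …, X_{i-1})` of a random sequence `X`.
def prefixSeq {Ω 𝒳 : Type*} (X : Ω → ℕ → 𝒳) (i : ℕ) : Ω → (Fin i → 𝒳) :=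
  fun ω j => X ω (j : ℕ)

-- Directed information `I(X^n → Y^n) = ∑_{i=1}^n I(X^i ; Y_i | Y^{i-1})` (0-indexed).
def directedInfo {Ω 𝒳 𝒴 : Type*} [Fintype Ω] (p : Ω → ℝ)
    (X : Ω → ℕ → 𝒳) (Y : Ω → ℕ → 𝒴) (n : ℕ) : ℝ :=
  ∑ i ∈ Finset.range n,
    condMutualInfo p (prefixSeq X (i + 1)) (fun ω => Y ω i) (prefixSeq Y i)

section Probability

variable {Ω : Type*} [Fintype Ω] {p : Ω → ℝ}

lemma pr_congr {E F : Ω → Prop} (h : ∀ ω, E ω ↔ F ω) : pr p E = pr p F := by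
  classical
  exact Finset.sum_congr rfl fun ω _ => if_congr (h ω) rfl rfl

lemma pr_pos (hp0 : ∀ ω, 0 ≤ p ω) {E : Ω → Prop} {ω : Ω} (hω : 0 < p ω) (hE : E ω) :
    0 < pr p E := by
  classical
  calc 0 < p ω := hω
    _ = if E ω then p ω else 0 := (if_pos hE).symm
    _ ≤ pr p E := Finset.single_le_sum (f := fun ω' => if E ω' then p ω' else 0)
        (fun ω' _ => by split_ifs <;> simp [hp0 ω']) (Finset.mem_univ ω)

lemma pr_eq_one_of_forall (hp1 : ∑ ω, p ω = 1) {E : Ω → Prop} (h : ∀ ω, E ω) :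
    pr p E = 1 := by
  simpa [pr, h] using hp1

end Probability

lemma prefixSeq_succ_eq_iff {Ω 𝒳 : Type*} (X : Ω → ℕ → 𝒳) (i : ℕ) (ω ω' : Ω) :
    prefixSeq X (i + 1) ω' = prefixSeq X (i + 1) ω ↔
      prefixSeq X i ω' = prefixSeq X i ω ∧ X ω' i = X ω i := by
  simp only [prefixSeq, funext_iff, Fin.forall_fin_succ', Fin.val_castSucc, Fin.val_last]

lemma log_div_mul_telescope {a b c d : ℕ → ℝ} (ha : ∀ i, 0 < a i) (hb : ∀ i, 0 < b i)
    (hc : ∀ i, 0 < c i) (hd : ∀ i, 0 < d i) (n : ℕ) :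
    Real.log (a n / (b n * c n)) - Real.log (a 0 / (b 0 * c 0)) =
      ∑ i ∈ range n,
        (Real.log (a (i + 1) * c i / (d i * c (i + 1))) +
          Real.log (d i * b i / (a i * b (i + 1)))) := by
  have hlog : ∀ {x y z : ℝ}, 0 < x → 0 < y → 0 < z →
      Real.log (x / (y * z)) = Real.log x - Real.log y - Real.log z := fun hx hy hz => by
    rw [Real.log_div hx.ne' (mul_pos hy hz).ne', Real.log_mul hy.ne' hz.ne', sub_sub]
  have hlog' : ∀ {x y z w : ℝ}, 0 < x → 0 < y → 0 < z → 0 < w →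
      Real.log (x * y / (z * w)) = Real.log x + Real.log y - Real.log z - Real.log w :=
    fun hx hy hz hw => by
      rw [mul_div_assoc, Real.log_mul hx.ne' (div_pos hy (mul_pos hz hw)).ne', hlog hy hz hw]
      ring
  rw [hlog (ha n) (hb n) (hc n), hlog (ha 0) (hb 0) (hc 0), ← Finset.sum_range_sub
    (fun i => Real.log (a i) - Real.log (b i) - Real.log (c i))]
  refine Finset.sum_congr rfl fun i _ => ?_
  rw [hlog' (ha _) (hc _) (hd _) (hc _), hlog' (hd _) (hb _) (ha _) (hb _)]
  ring

lemma log_pr_prefixSeq_ratio_eq_sum {Ω 𝒳 𝒴 : Type*} [Fintype Ω] {p : Ω → ℝ}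
    (hp0 : ∀ ω, 0 ≤ p ω) (hp1 : ∑ ω, p ω = 1) (X : Ω → ℕ → 𝒳) (Y : Ω → ℕ → 𝒴) (n : ℕ)
    {ω : Ω} (hω : 0 < p ω) :
    Real.log (pr p (fun ω' => prefixSeq X n ω' = prefixSeq X n ω ∧
          prefixSeq Y n ω' = prefixSeq Y n ω) /
        (pr p (fun ω' => prefixSeq X n ω' = prefixSeq X n ω) *
          pr p (fun ω' => prefixSeq Y n ω' = prefixSeq Y n ω))) =
      ∑ i ∈ range n,
        (Real.log ((pr p (fun ω' => prefixSeq X (i + 1) ω' = prefixSeq X (i + 1) ω ∧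
                Y ω' i = Y ω i ∧ prefixSeq Y i ω' = prefixSeq Y i ω) *
              pr p (fun ω' => prefixSeq Y i ω' = prefixSeq Y i ω)) /
            (pr p (fun ω' => prefixSeq X (i + 1) ω' = prefixSeq X (i + 1) ω ∧
                prefixSeq Y i ω' = prefixSeq Y i ω) *
              pr p (fun ω' => Y ω' i = Y ω i ∧ prefixSeq Y i ω' = prefixSeq Y i ω))) +
          Real.log ((pr p (fun ω' => prefixSeq Y i ω' = prefixSeq Y i ω ∧
                X ω' i = X ω i ∧ prefixSeq X i ω' = prefixSeq X i ω) *
              pr p (fun ω' => prefixSeq X i ω' = prefixSeq X i ω)) /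
            (pr p (fun ω' => prefixSeq Y i ω' = prefixSeq Y i ω ∧
                prefixSeq X i ω' = prefixSeq X i ω) *
              pr p (fun ω' => X ω' i = X ω i ∧ prefixSeq X i ω' = prefixSeq X i ω)))) := by
  set A : ℕ → ℝ := fun i => pr p (fun ω' => prefixSeq X i ω' = prefixSeq X i ω ∧
    prefixSeq Y i ω' = prefixSeq Y i ω)
  set B : ℕ → ℝ := fun i => pr p (fun ω' => prefixSeq X i ω' = prefixSeq X i ω)
  set C : ℕ → ℝ := fun i => pr p (fun ω' => prefixSeq Y i ω' = prefixSeq Y i ω)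
  set D : ℕ → ℝ := fun i => pr p (fun ω' => prefixSeq X (i + 1) ω' = prefixSeq X (i + 1) ω ∧
    prefixSeq Y i ω' = prefixSeq Y i ω)
  have hA : ∀ i, pr p (fun ω' => prefixSeq X (i + 1) ω' = prefixSeq X (i + 1) ω ∧
      Y ω' i = Y ω i ∧ prefixSeq Y i ω' = prefixSeq Y i ω) = A (i + 1) :=
    fun i => pr_congr fun ω' => by rw [prefixSeq_succ_eq_iff Y]; tauto
  have hA' : ∀ i, pr p (fun ω' => prefixSeq Y i ω' = prefixSeq Y i ω ∧
      prefixSeq X i ω' = prefixSeq X i ω) = A i :=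
    fun i => pr_congr fun ω' => and_comm
  have hB : ∀ i, pr p (fun ω' => X ω' i = X ω i ∧
      prefixSeq X i ω' = prefixSeq X i ω) = B (i + 1) :=
    fun i => pr_congr fun ω' => by rw [prefixSeq_succ_eq_iff X]; tauto
  have hC : ∀ i, pr p (fun ω' => Y ω' i = Y ω i ∧
      prefixSeq Y i ω' = prefixSeq Y i ω) = C (i + 1) :=
    fun i => pr_congr fun ω' => by rw [prefixSeq_succ_eq_iff Y]; tauto
  have hD : ∀ i, pr p (fun ω' => prefixSeq Y i ω' = prefixSeq Y i ω ∧
      X ω' i = X ω i ∧ prefixSeq X i ω' = prefixSeq X i ω) = D i :=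
    fun i => pr_congr fun ω' => by rw [prefixSeq_succ_eq_iff X]; tauto
  have h0 : Real.log (A 0 / (B 0 * C 0)) = 0 := by
    have hA0 : A 0 = 1 :=
      pr_eq_one_of_forall hp1 fun _ => ⟨Subsingleton.elim _ _, Subsingleton.elim _ _⟩
    have hB0 : B 0 = 1 := pr_eq_one_of_forall hp1 fun _ => Subsingleton.elim _ _
    have hC0 : C 0 = 1 := pr_eq_one_of_forall hp1 fun _ => Subsingleton.elim _ _
    rw [hA0, hB0, hC0]
    norm_num
  have key := log_div_mul_telescope (a := A) (b := B) (c := C) (d := D)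
    (fun _ => pr_pos hp0 hω ⟨rfl, rfl⟩) (fun _ => pr_pos hp0 hω rfl)
    (fun _ => pr_pos hp0 hω rfl) (fun _ => pr_pos hp0 hω ⟨rfl, rfl⟩) n
  rw [h0, sub_zero] at key
  simp only [hA, hA', hB, hC, hD]
  exact key

theorem massey_conservation_law_general
    {Ω 𝒳 𝒴 : Type*} [Fintype Ω]
    (p : Ω → ℝ) (hp0 : ∀ ω, 0 ≤ p ω) (hp1 : ∑ ω, p ω = 1)
    (X : Ω → ℕ → 𝒳) (Y : Ω → ℕ → 𝒴) (n : ℕ) :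
    mutualInfo p (prefixSeq X n) (prefixSeq Y n) =
      directedInfo p X Y n +
        ∑ i ∈ Finset.range n,
          condMutualInfo p (prefixSeq Y i) (fun ω => X ω i) (prefixSeq X i) := by
  unfold mutualInfo directedInfo condMutualInfo
  simp only [← Finset.sum_add_distrib]
  rw [Finset.sum_comm]
  refine Finset.sum_congr rfl fun ω _ => ?_
  rcases (hp0 ω).eq_or_lt with hpω | hpω
  · simp [← hpω]
  · simp only [← mul_add, ← Finset.mul_sum, log_pr_prefixSeq_ratio_eq_sum hp0 hp1 X Y n hpω]

/-- Massey's conservation law: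
`I(X^n; Y^n) = I(X^n→Y^n) + I(DY^n→X^n)`, where
`I(DY^n→X^n) = Σ_{i=1}^n I(Y^{i-1}; X_i | X^{i-1})`. -/
theorem massey_conservation_law
    {Ω 𝒳 𝒴 : Type*} [Fintype Ω] [Fintype 𝒳] [Fintype 𝒴]
    (p : Ω → ℝ) (hp0 : ∀ ω, 0 ≤ p ω) (hp1 : ∑ ω, p ω = 1)
    (X : Ω → ℕ → 𝒳) (Y : Ω → ℕ → 𝒴) (n : ℕ) :
    mutualInfo p (prefixSeq X n) (prefixSeq Y n) =
      directedInfo p X Y n +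
        ∑ i ∈ Finset.range n,
          condMutualInfo p (prefixSeq Y i) (fun ω => X ω i) (prefixSeq X i) :=
  massey_conservation_law_general p hp0 hp1 X Y n
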